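/- With the Table parameter values and β = 100, the TB model has an endemic equilibrium: there exist positive reals S, L1, I, L2, R with S + L1 + I + L2 + R = 30000 and I > 0 such that, with the delayed value I_d = I, all five right-hand sides of the model equations vanish. -/
import Mathlib


noncomputable section TBEndemic

/-- Table parameter values, with transmission coefficient `β = 100`. -/
def μ : ℝ := 1 / 70
def β : ℝ := 100
def δ : ℝ := 12
def φ : ℝ := 0.05
def ω : ℝ := 0.0002
def ωR : ℝ := 0.00002
def σ : ℝ := 0.25
def σR : ℝ := 0.25
def τ0 : ℝ := 2
def τ1 : ℝ := 2
def τ2 : ℝ := 1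
def Ntot : ℝ := 30000

/- Auxiliary rational functions expressing the equilibrium in terms of `I`. -/
def dSf (I : ℝ) : ℝ := I / 300 + 1 / 70
def dLf (I : ℝ) : ℝ := I / 1200 + 1 / 5000 + 1 + 1 / 70
def dRf (I : ℝ) : ℝ := I / 1200 + 1 / 50000 + 1 / 70
def aLf (I : ℝ) : ℝ := (57 / 5) / dLf I
def Sf (I : ℝ) : ℝ := (3000 / 7) / dSf I
def L1num (I : ℝ) : ℝ := I * (141 / 70 - (2 / 50000) / dRf I)
def L1den (I : ℝ) : ℝ := 3 / 5 + (1 / 5000) * aLf I + (1 / 50000) * (2 + aLf I) / dRf I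
def L1f (I : ℝ) : ℝ := L1num I / L1den I
def L2f (I : ℝ) : ℝ := aLf I * L1f I
def Rnum (I : ℝ) : ℝ := 2 * I + 2 * L1f I + L2f I
def Rf (I : ℝ) : ℝ := Rnum I / dRf I
def Ff (I : ℝ) : ℝ :=
  (I / 300) * (Sf I + (1 / 4) * L2f I + (1 / 4) * Rf I) - (12 + 2 + 1 / 70) * L1f I

lemma hdS_pos : ∀ x ∈ Set.Icc (11 : ℝ) 12, 0 < dSf x := by
  intro x hx; have := hx.1; unfold dSf; linarith

lemma hdL_pos : ∀ x ∈ Set.Icc (11 : ℝ) 12, 0 < dLf x := by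
  intro x hx; have := hx.1; unfold dLf; linarith

lemma hdR_pos : ∀ x ∈ Set.Icc (11 : ℝ) 12, 0 < dRf x := by
  intro x hx; have := hx.1; unfold dRf; linarith

lemma haL_pos : ∀ x ∈ Set.Icc (11 : ℝ) 12, 0 < aLf x := by
  intro x hx; exact div_pos (by norm_num) (hdL_pos x hx)

lemma hden_pos : ∀ x ∈ Set.Icc (11 : ℝ) 12, 0 < L1den x := by
  intro x hx
  have h1 := haL_pos x hx
  have h2 := hdR_pos x hx
  unfold L1den
  have : 0 < (1 / 50000) * (2 + aLf x) / dRf x :=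
    div_pos (by nlinarith) h2
  nlinarith

lemma contFf : ContinuousOn Ff (Set.Icc (11 : ℝ) 12) := by
  have hdS : ∀ x ∈ Set.Icc (11 : ℝ) 12, dSf x ≠ 0 := fun x hx => (hdS_pos x hx).ne'
  have hdL : ∀ x ∈ Set.Icc (11 : ℝ) 12, dLf x ≠ 0 := fun x hx => (hdL_pos x hx).ne'
  have hdR : ∀ x ∈ Set.Icc (11 : ℝ) 12, dRf x ≠ 0 := fun x hx => (hdR_pos x hx).ne'
  have hld : ∀ x ∈ Set.Icc (11 : ℝ) 12, L1den x ≠ 0 := fun x hx => (hden_pos x hx).ne'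
  have cdS : ContinuousOn dSf (Set.Icc (11 : ℝ) 12) := by
    unfold dSf; fun_prop
  have cdL : ContinuousOn dLf (Set.Icc (11 : ℝ) 12) := by
    unfold dLf; fun_prop
  have cdR : ContinuousOn dRf (Set.Icc (11 : ℝ) 12) := by
    unfold dRf; fun_prop
  have caL : ContinuousOn aLf (Set.Icc (11 : ℝ) 12) := by
    unfold aLf; exact ContinuousOn.div continuousOn_const cdL hdL
  have cS : ContinuousOn Sf (Set.Icc (11 : ℝ) 12) := by
    unfold Sf; exact ContinuousOn.div continuousOn_const cdS hdS
  have cL1num : ContinuousOn L1num (Set.Icc (11 : ℝ) 12) := by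
    unfold L1num
    exact continuousOn_id.mul
      (continuousOn_const.sub (ContinuousOn.div continuousOn_const cdR hdR))
  have cL1den : ContinuousOn L1den (Set.Icc (11 : ℝ) 12) := by
    unfold L1den
    exact (continuousOn_const.add (continuousOn_const.mul caL)).add
      (ContinuousOn.div (continuousOn_const.mul (continuousOn_const.add caL)) cdR hdR)
  have cL1 : ContinuousOn L1f (Set.Icc (11 : ℝ) 12) := by
    unfold L1f; exact ContinuousOn.div cL1num cL1den hld
  have cL2 : ContinuousOn L2f (Set.Icc (11 : ℝ) 12) := by
    unfold L2f; exact caL.mul cL1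
  have cR : ContinuousOn Rf (Set.Icc (11 : ℝ) 12) := by
    unfold Rf Rnum
    exact ContinuousOn.div
      (((continuousOn_const.mul continuousOn_id).add
        (continuousOn_const.mul cL1)).add cL2) cdR hdR
  unfold Ff
  exact ((continuousOn_id.div_const 300).mul
    ((cS.add (continuousOn_const.mul cL2)).add (continuousOn_const.mul cR))).sub
    (continuousOn_const.mul cL1)

/-- With the Table parameter values and `β = 100`, the TB model has an endemic
equilibrium: positive state values summing to `30000` with `I > 0` at which,
with delayed value `I_d = I`, all five right-hand sides vanish. -/
theorem tb_endemic_equilibrium_exists :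
    ∃ S L1 I L2 R : ℝ,
      0 < S ∧ 0 < L1 ∧ 0 < I ∧ 0 < L2 ∧ 0 < R ∧
      S + L1 + I + L2 + R = 30000 ∧
      μ * Ntot - (β / Ntot) * I * S - μ * S = 0 ∧
      (β / Ntot) * I * (S + σ * L2 + σR * R) - (δ + τ1 + μ) * L1 = 0 ∧
      φ * δ * L1 + ω * L2 + ωR * R - τ0 * I - μ * I = 0 ∧
      (1 - φ) * δ * L1 - σ * (β / Ntot) * I * L2 - (ω + τ2 + μ) * L2 = 0 ∧
      τ0 * I + τ1 * L1 + τ2 * L2 - σR * (β / Ntot) * I * R - (ωR + μ) * R = 0 := by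
  -- obtain the root of `Ff` in `[11, 12]` by the intermediate value theorem
  have h0 : (0 : ℝ) ∈ Set.Icc (Ff 12) (Ff 11) := by
    constructor
    · simp only [Ff, Sf, L1f, L2f, Rf, Rnum, L1num, L1den, aLf, dSf, dLf, dRf]; norm_num
    · simp only [Ff, Sf, L1f, L2f, Rf, Rnum, L1num, L1den, aLf, dSf, dLf, dRf]; norm_num
  obtain ⟨I, hIs, hFI⟩ := intermediate_value_Icc' (by norm_num : (11 : ℝ) ≤ 12) contFf h0
  obtain ⟨hI1, hI2⟩ := hIs
  have hdS := hdS_pos I ⟨hI1, hI2⟩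
  have hdL := hdL_pos I ⟨hI1, hI2⟩
  have hdR := hdR_pos I ⟨hI1, hI2⟩
  have haL := haL_pos I ⟨hI1, hI2⟩
  have hden := hden_pos I ⟨hI1, hI2⟩
  have hIpos : (0 : ℝ) < I := by linarith
  have hnum : 0 < L1num I := by
    unfold L1num
    have h2 : (2 : ℝ) / 50000 / dRf I < 141 / 70 := by
      rw [div_lt_iff₀ hdR]; unfold dRf; nlinarith
    exact mul_pos hIpos (by linarith)
  have hL1 : 0 < L1f I := div_pos hnum hden
  have hL2 : 0 < L2f I := mul_pos haL hL1
  have hR : 0 < Rf I := div_pos (by unfold Rnum; linarith) hdR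
  have hS : 0 < Sf I := div_pos (by norm_num) hdS
  -- the five equilibrium equations with numerals
  have e1 : (1 / 70 : ℝ) * 30000 - (100 / 30000) * I * Sf I - (1 / 70) * Sf I = 0 := by
    unfold Sf dSf
    field_simp
    ring
  have e2 : (100 / 30000 : ℝ) * I * (Sf I + (1/4) * L2f I + (1/4) * Rf I)
      - (12 + 2 + 1 / 70) * L1f I = 0 := by
    unfold Ff at hFI
    linear_combination hFI
  have e3 : (1/20 : ℝ) * 12 * L1f I + (1/5000) * L2f I + (1/50000) * Rf I
      - 2 * I - (1 / 70) * I = 0 := by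
    have hL1' : L1f I * L1den I = L1num I := div_mul_cancel₀ _ hden.ne'
    simp only [L1num, L1den] at hL1'
    simp only [Rf, Rnum, L2f]
    linear_combination hL1'
  have e4 : (1 - 1/20 : ℝ) * 12 * L1f I - (1/4) * (100 / 30000) * I * L2f I
      - (1/5000 + 1 + 1 / 70) * L2f I = 0 := by
    unfold L2f aLf dLf
    field_simp
    ring
  have e5 : (2 : ℝ) * I + 2 * L1f I + 1 * L2f I - (1/4) * (100 / 30000) * I * Rf I
      - (1/50000 + 1 / 70) * Rf I = 0 := by
    unfold Rf Rnum dRf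
    field_simp
    ring
  refine ⟨Sf I, L1f I, I, L2f I, Rf I, hS, hL1, hIpos, hL2, hR, ?_, ?_, ?_, ?_, ?_, ?_⟩
  · linear_combination (-70 : ℝ) * e1 - 70 * e2 - 70 * e3 - 70 * e4 - 70 * e5
  · unfold μ β Ntot; linear_combination e1
  · unfold β Ntot δ τ1 μ σ σR; linear_combination e2
  · unfold φ δ ω ωR τ0 μ; linear_combination e3
  · unfold φ δ σ β Ntot ω τ2 μ; linear_combination e4
  · unfold τ0 τ1 τ2 σR β Ntot ωR μ; linear_combination e5

end TBEndemic
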